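/- arXiv:2601.11195 — 2 statements merged into one kernel-verified Lean document; each statement's English description precedes it below -/
import Mathlib

section
/- Let O be an orthogonal n×n matrix with nonnegativity constraint O₁ᵀMₗ ≥ 0 for each ℓ, where M₁,…,M_k ∈ ℝⁿ are unit vectors, and suppose moreover O₁ᵀMₗ ≥ τ·|OⱼᵀMₗ| for all j ≥ 2 with τ > 0. If there exists a set G ⊆ unit sphere of ℝⁿ with O₁ ∈ G, then τ ≤ √(n-1)·cot(min_{q∈G} max_{ℓ} α(Mₗ, q)), where α(u,v) = arccos(uᵀv) denotes the angle between unit vectors, provided the inner min-max angle lies in (0, π/2). -/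
open Finset in
theorem tau_upper_bound
    (n k : ℕ) (hn : 2 ≤ n) (hk : 0 < k)
    (M : Fin k → (Fin n → ℝ))
    (hM : ∀ ℓ, (∑ i, M ℓ i ^ 2) = 1)
    (G : Set (Fin n → ℝ))
    (hG : ∀ q ∈ G, (∑ i, q i ^ 2) = 1)
    (O : Matrix (Fin n) (Fin n) ℝ)
    (hO : O ∈ Matrix.orthogonalGroup (Fin n) ℝ)
    (hOG : (fun i => O i ⟨0, by omega⟩) ∈ G)
    (τ : ℝ) (hτ : 0 < τ)
    (hpos : ∀ ℓ : Fin k, 0 ≤ ∑ i, O i ⟨0, by omega⟩ * M ℓ i)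
    (hrank : ∀ (ℓ : Fin k) (j : Fin n), j ≠ ⟨0, by omega⟩ →
      (∑ i, O i ⟨0, by omega⟩ * M ℓ i) ≥ τ * |∑ i, O i j * M ℓ i|)
    (hangle : sInf {a : ℝ | ∃ q ∈ G,
        a = ⨆ ℓ : Fin k, Real.arccos (∑ i, M ℓ i * q i)} ∈
        Set.Ioo 0 (Real.pi / 2)) :
    τ ≤ Real.sqrt ((n : ℝ) - 1) *
      Real.cot (sInf {a : ℝ | ∃ q ∈ G,
        a = ⨆ ℓ : Fin k, Real.arccos (∑ i, M ℓ i * q i)}) := by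
  haveI : Nonempty (Fin k) := Fin.pos_iff_nonempty.1 hk
  set A := sInf {a : ℝ | ∃ q ∈ G,
        a = ⨆ ℓ : Fin k, Real.arccos (∑ i, M ℓ i * q i)} with hA
  have hn1 : (1 : ℝ) ≤ (n : ℝ) - 1 := by
    have : (2 : ℝ) ≤ (n : ℝ) := by exact_mod_cast hn
    linarith
  set S : ℝ := τ ^ 2 + ((n : ℝ) - 1) with hS
  have hSpos : 0 < S := by positivity
  have hsqrtS : 0 < Real.sqrt S := Real.sqrt_pos.2 hSpos
  set t : ℝ := τ / Real.sqrt S with ht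
  have htpos : 0 < t := div_pos hτ hsqrtS
  have ht1 : t ≤ 1 := by
    rw [ht, div_le_one hsqrtS]
    calc τ = Real.sqrt (τ ^ 2) := by rw [Real.sqrt_sq hτ.le]
      _ ≤ Real.sqrt S := by
          apply Real.sqrt_le_sqrt; rw [hS]; linarith
  have hOO : O * O.transpose = 1 := by
    have := (Matrix.mem_orthogonalGroup_iff (Fin n) ℝ).1 hO
    simpa [Matrix.star_eq_conjTranspose] using this
  -- key: for each ℓ the inner product with the first column is in [t, 1]
  have hkey : ∀ ℓ : Fin k, t ≤ (∑ i, M ℓ i * O i ⟨0, by omega⟩) ∧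
      (∑ i, M ℓ i * O i ⟨0, by omega⟩) ≤ 1 := by
    intro ℓ
    set f : Fin n → ℝ := fun j => ∑ i, O i j * M ℓ i with hf
    have hfv : f = Matrix.vecMul (M ℓ) O := by
      funext j
      simp only [hf, Matrix.vecMul, dotProduct]
      exact Finset.sum_congr rfl fun i _ => mul_comm _ _
    have hsum : ∑ j, f j ^ 2 = 1 := by
      have hd : dotProduct f f = dotProduct (M ℓ) (M ℓ) := by
        nth_rewrite 1 [hfv]
        rw [← Matrix.dotProduct_mulVec, hfv, Matrix.mulVec_vecMul, hOO,
          Matrix.one_mulVec]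
      have h2 : ∑ j, f j ^ 2 = dotProduct f f := by
        simp [dotProduct, sq]
      rw [h2, hd]
      simpa [dotProduct, sq] using hM ℓ
    have hf0 : 0 ≤ f ⟨0, by omega⟩ := hpos ℓ
    have hbound : ∀ j : Fin n, j ≠ ⟨0, by omega⟩ →
        f j ^ 2 ≤ f ⟨0, by omega⟩ ^ 2 / τ ^ 2 := by
      intro j hj
      have h2 : τ * |f j| ≤ f ⟨0, by omega⟩ := hrank ℓ j hj
      have h3 : (τ * |f j|) ^ 2 ≤ f ⟨0, by omega⟩ ^ 2 := by
        apply sq_le_sq' _ h2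
        have : 0 ≤ τ * |f j| := by positivity
        linarith
      rw [mul_pow, sq_abs] at h3
      rw [le_div_iff₀ (by positivity)]
      linarith
    have hsplit : ∑ j, f j ^ 2
        = f ⟨0, by omega⟩ ^ 2 + ∑ j ∈ Finset.univ.erase ⟨0, by omega⟩, f j ^ 2 :=
      (Finset.add_sum_erase _ _ (Finset.mem_univ _)).symm
    have hrest : ∑ j ∈ Finset.univ.erase (⟨0, by omega⟩ : Fin n), f j ^ 2
        ≤ ((n : ℝ) - 1) * (f ⟨0, by omega⟩ ^ 2 / τ ^ 2) := by
      calc ∑ j ∈ Finset.univ.erase (⟨0, by omega⟩ : Fin n), f j ^ 2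
          ≤ ∑ _j ∈ Finset.univ.erase (⟨0, by omega⟩ : Fin n),
              f ⟨0, by omega⟩ ^ 2 / τ ^ 2 :=
            Finset.sum_le_sum fun j hj => hbound j (Finset.ne_of_mem_erase hj)
        _ = ((n : ℝ) - 1) * (f ⟨0, by omega⟩ ^ 2 / τ ^ 2) := by
            rw [Finset.sum_const, Finset.card_erase_of_mem (Finset.mem_univ _),
              Finset.card_univ, Fintype.card_fin, nsmul_eq_mul]
            have h4 : ((n - 1 : ℕ) : ℝ) = (n : ℝ) - 1 := by
              have h5 : 1 ≤ n := by omega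
              push_cast [Nat.cast_sub h5]; ring
            rw [h4]
    have hrestnn : 0 ≤ ∑ j ∈ Finset.univ.erase (⟨0, by omega⟩ : Fin n), f j ^ 2 :=
      Finset.sum_nonneg fun j _ => sq_nonneg _
    have hf0sq : τ ^ 2 / S ≤ f ⟨0, by omega⟩ ^ 2 := by
      rw [div_le_iff₀ hSpos]
      have h6 : (1 : ℝ) ≤ f ⟨0, by omega⟩ ^ 2 + ((n : ℝ) - 1) * (f ⟨0, by omega⟩ ^ 2 / τ ^ 2) := by
        rw [hsplit] at hsum; linarith
      have hτ2 : 0 < τ ^ 2 := by positivity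
      have h7 : ((n:ℝ) - 1) * (f ⟨0, by omega⟩ ^ 2 / τ ^ 2) * τ ^ 2
          = ((n:ℝ) - 1) * f ⟨0, by omega⟩ ^ 2 := by
        field_simp
      rw [hS]
      nlinarith [h6, h7, hτ2]
    have hle : t ≤ f ⟨0, by omega⟩ := by
      have h := Real.sqrt_le_sqrt hf0sq
      rwa [Real.sqrt_div (by positivity) S, Real.sqrt_sq hτ.le,
        Real.sqrt_sq hf0, ← ht] at h
    have hle1 : f ⟨0, by omega⟩ ≤ 1 := by
      have : f ⟨0, by omega⟩ ^ 2 ≤ 1 := by rw [hsplit] at hsum; linarith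
      nlinarith
    have hfc : f ⟨0, by omega⟩ = ∑ i, M ℓ i * O i ⟨0, by omega⟩ :=
      Finset.sum_congr rfl fun i _ => mul_comm _ _
    rw [hfc] at hle hle1
    exact ⟨hle, hle1⟩
  -- the set and its element coming from the first column of O
  set B := Real.arccos t with hB
  have hBle : B ≤ Real.pi / 2 := Real.arccos_le_pi_div_two.2 htpos.le
  have ha0 : (⨆ ℓ : Fin k, Real.arccos (∑ i, M ℓ i * O i ⟨0, by omega⟩)) ∈
      {a : ℝ | ∃ q ∈ G, a = ⨆ ℓ : Fin k, Real.arccos (∑ i, M ℓ i * q i)} :=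
    ⟨_, hOG, rfl⟩
  have hbdd : BddBelow {a : ℝ | ∃ q ∈ G,
      a = ⨆ ℓ : Fin k, Real.arccos (∑ i, M ℓ i * q i)} := by
    refine ⟨0, fun a ha => ?_⟩
    obtain ⟨q, _, rfl⟩ := ha
    exact Real.iSup_nonneg fun ℓ => Real.arccos_nonneg _
  have hAa0 : A ≤ ⨆ ℓ : Fin k, Real.arccos (∑ i, M ℓ i * O i ⟨0, by omega⟩) :=
    csInf_le hbdd ha0
  have ha0B : (⨆ ℓ : Fin k, Real.arccos (∑ i, M ℓ i * O i ⟨0, by omega⟩)) ≤ B := by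
    refine ciSup_le fun ℓ => ?_
    obtain ⟨h1, h2⟩ := hkey ℓ
    exact Real.strictAntiOn_arccos.antitoneOn ⟨by linarith, ht1⟩
      ⟨by linarith, h2⟩ h1
  have hAB : A ≤ B := hAa0.trans ha0B
  obtain ⟨hA0, hA2⟩ := hangle
  have hsinA : 0 < Real.sin A :=
    Real.sin_pos_of_pos_of_lt_pi hA0 (by linarith [Real.pi_pos])
  have hcosB : Real.cos B = t := Real.cos_arccos (by linarith) ht1
  have hsinB : Real.sin B = Real.sqrt ((n : ℝ) - 1) / Real.sqrt S := by
    rw [hB, Real.sin_arccos]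
    have h1 : 1 - t ^ 2 = ((n : ℝ) - 1) / S := by
      rw [ht, div_pow, Real.sq_sqrt hSpos.le]
      field_simp; rw [hS]; ring
    rw [h1, Real.sqrt_div (by linarith) S]
  have hcos : t ≤ Real.cos A := by
    rw [← hcosB]
    exact Real.cos_le_cos_of_nonneg_of_le_pi hA0.le
      (by linarith [Real.pi_pos]) hAB
  have hsin : Real.sin A ≤ Real.sin B :=
    Real.sin_le_sin_of_le_of_le_pi_div_two (by linarith [Real.pi_pos]) hBle hAB
  rw [Real.cot_eq_cos_div_sin, ← mul_div_assoc, le_div_iff₀ hsinA]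
  calc τ * Real.sin A ≤ τ * Real.sin B := by nlinarith
    _ = Real.sqrt ((n : ℝ) - 1) * t := by rw [hsinB, ht]; ring
    _ ≤ Real.sqrt ((n : ℝ) - 1) * Real.cos A := by
        have h9 : (0:ℝ) ≤ Real.sqrt ((n : ℝ) - 1) := Real.sqrt_nonneg _
        nlinarith
end

section
/- Fix n ≥ 2, τ ≥ 1, and a unit vector q₀ ∈ ℝⁿ. Let ρ = arctan(√(n-1)/τ). Then there exist unit vectors M₁, M₂ ∈ ℝⁿ with M₁ᵀM₂ = cos(2ρ) such that q₀ᵀM₁ = q₀ᵀM₂ = cos ρ, and any unit vector q with angle at most ρ to both M₁ and M₂ must equal q₀. -/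
/-!
Complete `q₀` by a unit vector `w ⟂ q₀` (possible as `n ≥ 2`) and take `M₁, M₂` on the great
circle through `q₀` and `w`, at angles `ρ` and `-ρ` from `q₀`. As `0 < cos ρ`, the conditions
`cos ρ ≤ ⟪q, M₁⟫` and `cos ρ ≤ ⟪q, M₂⟫` add up to `cos ρ ≤ cos ρ * ⟪q, q₀⟫`, so `⟪q, q₀⟫ = 1`,
which forces `q = q₀` for unit vectors.
-/

open Real RealInnerProductSpace

theorem Real.cos_le_of_arccos_le {x ρ : ℝ} (hρ : ρ < π) (h : arccos x ≤ ρ) : cos ρ ≤ x := by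
  rcases le_or_gt 1 x with hx | hx
  · exact (cos_le_one ρ).trans hx
  have hx' : -1 < x := arccos_lt_pi.mp (h.trans_lt hρ)
  calc cos ρ ≤ cos (arccos x) := cos_le_cos_of_nonneg_of_le_pi (arccos_nonneg x) hρ.le h
    _ = x := cos_arccos hx'.le hx.le

section InnerProductSpace

variable {E : Type*} [NormedAddCommGroup E] [InnerProductSpace ℝ E]

theorem exists_norm_eq_one_inner_eq_zero [FiniteDimensional ℝ E]
    (hE : 2 ≤ Module.finrank ℝ E) (u : E) : ∃ w : E, ‖w‖ = 1 ∧ ⟪u, w⟫ = 0 := by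
  have hspan : Module.finrank ℝ (ℝ ∙ u) ≤ 1 := by
    simpa using finrank_span_le_card ({u} : Set E)
  have hperp : (ℝ ∙ u)ᗮ ≠ ⊥ := by
    rw [Ne, ← Submodule.finrank_eq_zero]
    have := (ℝ ∙ u).finrank_add_finrank_orthogonal
    omega
  obtain ⟨v, hv, hv0⟩ := Submodule.exists_mem_ne_zero_of_ne_bot hperp
  refine ⟨(‖v‖⁻¹ : ℝ) • v, norm_smul_inv_norm hv0, ?_⟩
  rw [inner_smul_right, Submodule.mem_orthogonal_singleton_iff_inner_right.mp hv, mul_zero]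

/-- The point at angle `θ` from `u`, towards `w`, on the great circle through `u` and `w`. -/
noncomputable def greatCircle (u w : E) (θ : ℝ) : E := cos θ • u + sin θ • w

variable {u w : E}

theorem inner_greatCircle_greatCircle (hu : ‖u‖ = 1) (hw : ‖w‖ = 1) (huw : ⟪u, w⟫ = 0)
    (θ φ : ℝ) : ⟪greatCircle u w θ, greatCircle u w φ⟫ = cos (θ - φ) := by
  have hwu : ⟪w, u⟫ = 0 := by rw [real_inner_comm, huw]
  simp only [greatCircle, inner_add_left, inner_add_right, inner_smul_left, inner_smul_right,
    real_inner_self_eq_norm_sq, hu, hw, huw, hwu, cos_sub, RCLike.conj_to_real]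
  ring

theorem norm_greatCircle (hu : ‖u‖ = 1) (hw : ‖w‖ = 1) (huw : ⟪u, w⟫ = 0) (θ : ℝ) :
    ‖greatCircle u w θ‖ = 1 := by
  have := inner_greatCircle_greatCircle hu hw huw θ θ
  rwa [sub_self, cos_zero, real_inner_self_eq_norm_sq,
    pow_eq_one_iff_of_nonneg (norm_nonneg _) two_ne_zero] at this

theorem inner_greatCircle_right (hu : ‖u‖ = 1) (huw : ⟪u, w⟫ = 0) (θ : ℝ) :
    ⟪u, greatCircle u w θ⟫ = cos θ := by
  simp only [greatCircle, inner_add_right, inner_smul_right, real_inner_self_eq_norm_sq, hu, huw]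
  ring

theorem inner_greatCircle_add_inner_greatCircle_neg (q : E) (θ : ℝ) :
    ⟪q, greatCircle u w θ⟫ + ⟪q, greatCircle u w (-θ)⟫ = 2 * cos θ * ⟪q, u⟫ := by
  simp only [greatCircle, inner_add_right, inner_smul_right, cos_neg, sin_neg]
  ring

theorem eq_of_cos_le_inner_greatCircle {q : E} {θ : ℝ} (hu : ‖u‖ = 1) (hq : ‖q‖ = 1)
    (hθ : 0 < cos θ) (h₁ : cos θ ≤ ⟪q, greatCircle u w θ⟫)
    (h₂ : cos θ ≤ ⟪q, greatCircle u w (-θ)⟫) : q = u := by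
  have hsum := inner_greatCircle_add_inner_greatCircle_neg (u := u) (w := w) q θ
  have hge : 1 ≤ ⟪q, u⟫ := le_of_mul_le_mul_left (by linarith) hθ
  have hle : ⟪q, u⟫ ≤ 1 := by simpa [hq, hu] using real_inner_le_norm q u
  exact (inner_eq_one_iff_of_norm_eq_one hq hu).mp (le_antisymm hle hge)

end InnerProductSpace

theorem sum_mul_eq_inner_toLp {n : ℕ} (x y : Fin n → ℝ) :
    ∑ i, x i * y i = ⟪WithLp.toLp 2 x, WithLp.toLp 2 y⟫ := by
  simp [EuclideanSpace.inner_toLp_toLp, dotProduct, mul_comm]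

theorem sum_sq_eq_one_iff_norm_toLp {n : ℕ} (x : Fin n → ℝ) :
    ∑ i, x i ^ 2 = 1 ↔ ‖WithLp.toLp 2 x‖ = 1 := by
  rw [← pow_eq_one_iff_of_nonneg (norm_nonneg _) two_ne_zero, ← real_inner_self_eq_norm_sq,
    ← sum_mul_eq_inner_toLp]
  simp only [sq]

open Finset in
theorem point_identification_construction_general
    (n : ℕ) (hn : 2 ≤ n) (τ : ℝ)
    (q₀ : Fin n → ℝ) (hq₀ : (∑ i, q₀ i ^ 2) = 1) :
    ∃ M₁ M₂ : Fin n → ℝ,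
      (∑ i, M₁ i ^ 2) = 1 ∧ (∑ i, M₂ i ^ 2) = 1 ∧
      (∑ i, M₁ i * M₂ i) =
        Real.cos (2 * Real.arctan (Real.sqrt ((n : ℝ) - 1) / τ)) ∧
      (∑ i, q₀ i * M₁ i) = Real.cos (Real.arctan (Real.sqrt ((n : ℝ) - 1) / τ)) ∧
      (∑ i, q₀ i * M₂ i) = Real.cos (Real.arctan (Real.sqrt ((n : ℝ) - 1) / τ)) ∧
      ∀ q : Fin n → ℝ, (∑ i, q i ^ 2) = 1 →
        Real.arccos (∑ i, q i * M₁ i) ≤ Real.arctan (Real.sqrt ((n : ℝ) - 1) / τ) →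
        Real.arccos (∑ i, q i * M₂ i) ≤ Real.arctan (Real.sqrt ((n : ℝ) - 1) / τ) →
        q = q₀ := by
  set ρ := arctan (√((n : ℝ) - 1) / τ)
  have hρ : ρ < π := (arctan_lt_pi_div_two _).trans (by linarith [pi_pos])
  set u : EuclideanSpace ℝ (Fin n) := WithLp.toLp 2 q₀ with hu_def
  have hu : ‖u‖ = 1 := (sum_sq_eq_one_iff_norm_toLp q₀).mp hq₀
  obtain ⟨w, hw, huw⟩ := exists_norm_eq_one_inner_eq_zero (by simpa using hn) u
  refine ⟨(greatCircle u w ρ).ofLp, (greatCircle u w (-ρ)).ofLp, ?_⟩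
  simp only [sum_mul_eq_inner_toLp, sum_sq_eq_one_iff_norm_toLp, WithLp.toLp_ofLp, ← hu_def,
    norm_greatCircle hu hw huw, inner_greatCircle_greatCircle hu hw huw,
    inner_greatCircle_right hu huw]
  refine ⟨trivial, trivial, by rw [sub_neg_eq_add, two_mul], trivial, cos_neg ρ, ?_⟩
  intro q hq h₁ h₂
  exact WithLp.toLp_injective 2 <| eq_of_cos_le_inner_greatCircle hu hq (cos_arctan_pos _)
    (cos_le_of_arccos_le hρ h₁) (cos_le_of_arccos_le hρ h₂)

open Finset in
theorem point_identification_construction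
    (n : ℕ) (hn : 2 ≤ n) (τ : ℝ) (hτ : 1 ≤ τ)
    (q₀ : Fin n → ℝ) (hq₀ : (∑ i, q₀ i ^ 2) = 1) :
    ∃ M₁ M₂ : Fin n → ℝ,
      (∑ i, M₁ i ^ 2) = 1 ∧ (∑ i, M₂ i ^ 2) = 1 ∧
      (∑ i, M₁ i * M₂ i) =
        Real.cos (2 * Real.arctan (Real.sqrt ((n : ℝ) - 1) / τ)) ∧
      (∑ i, q₀ i * M₁ i) = Real.cos (Real.arctan (Real.sqrt ((n : ℝ) - 1) / τ)) ∧
      (∑ i, q₀ i * M₂ i) = Real.cos (Real.arctan (Real.sqrt ((n : ℝ) - 1) / τ)) ∧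
      ∀ q : Fin n → ℝ, (∑ i, q i ^ 2) = 1 →
        Real.arccos (∑ i, q i * M₁ i) ≤ Real.arctan (Real.sqrt ((n : ℝ) - 1) / τ) →
        Real.arccos (∑ i, q i * M₂ i) ≤ Real.arctan (Real.sqrt ((n : ℝ) - 1) / τ) →
        q = q₀ :=
  point_identification_construction_general n hn τ q₀ hq₀
end
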